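/- For all real numbers h, b and z, the Gaussian integral identity ∫_{−∞}^{h} φ(z)[1 − e^{−(b−z)(b−x)}] φ(x) dx = φ(z)Φ(h) − φ(b)Φ(h − b + z) holds. (With b = h_L this is the discrete-time corrected non-normalized density p_{h,L}^{(0,1)}(z) = ∫_{−∞}^{h} q_{h_L}^{(0,1)}(x→z) φ(x) dx.) -/

import Mathlib

/-!
Completing the square in the exponent, `z² + 2(b - z)(b - x) + x² = b² + (x - (b - z))²`, turns the
correction term `φ(z) e^{-(b-z)(b-x)} φ(x)` into `φ(b) φ(x - (b - z))`, a translated Gaussian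
density, whose integral over `(-∞, h]` is `φ(b) Φ(h - b + z)`.
-/

open MeasureTheory Real

/-- The standard normal density. -/
noncomputable def phi (x : ℝ) : ℝ := (Real.sqrt (2 * Real.pi))⁻¹ * Real.exp (-x ^ 2 / 2)

/-- The standard normal cumulative distribution function. -/
noncomputable def Phi (t : ℝ) : ℝ := ∫ x in Set.Iic t, phi x

lemma integrable_phi : Integrable phi := by
  refine ((integrable_exp_neg_mul_sq (by norm_num : (0 : ℝ) < 2⁻¹)).const_mul (√(2 * π))⁻¹).congr
    (ae_of_all _ fun x => ?_)
  simp only [phi, div_eq_inv_mul, mul_neg, neg_mul]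

lemma setIntegral_Iic_comp_sub_right {E : Type*} [NormedAddCommGroup E] [NormedSpace ℝ E]
    (f : ℝ → E) (c h : ℝ) :
    ∫ x in Set.Iic h, f (x - c) = ∫ x in Set.Iic (h - c), f x := by
  simpa using (measurePreserving_sub_right volume c).setIntegral_preimage_emb
    (measurableEmbedding_subRight c) f (Set.Iic (h - c))

lemma phi_mul_exp_mul_phi (b z x : ℝ) :
    phi z * exp (-(b - z) * (b - x)) * phi x = phi b * phi (x - (b - z)) := by
  have exponents : exp (-z ^ 2 / 2) * exp (-(b - z) * (b - x)) * exp (-x ^ 2 / 2) =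
      exp (-b ^ 2 / 2) * exp (-(x - (b - z)) ^ 2 / 2) := by
    simp only [← exp_add]
    ring_nf
  simp only [phi]
  linear_combination (√(2 * π))⁻¹ ^ 2 * exponents

/-- For all real `h, b, z`:
`∫_{−∞}^{h} φ(z)[1 − e^{−(b−z)(b−x)}] φ(x) dx = φ(z)Φ(h) − φ(b)Φ(h − b + z)`
(the discrete-time corrected non-normalized density `p_{h,L}^{(0,1)}(z)` with `b = h_L`). -/
theorem integral_corrected_transition_kernel (h b z : ℝ) :
    ∫ x in Set.Iic h, phi z * (1 - Real.exp (-(b - z) * (b - x))) * phi x =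
      phi z * Phi h - phi b * Phi (h - b + z) := by
  have integrand : ∀ x, phi z * (1 - exp (-(b - z) * (b - x))) * phi x =
      phi z * phi x - phi b * phi (x - (b - z)) := fun x => by
    rw [← phi_mul_exp_mul_phi]
    ring
  simp_rw [integrand]
  rw [integral_sub (integrable_phi.const_mul _).integrableOn
      ((integrable_phi.comp_sub_right _).const_mul _).integrableOn,
    integral_const_mul, integral_const_mul, setIntegral_Iic_comp_sub_right, ← sub_add]
  rfl
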